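/- (Rates under p-convexity, estimate form.) Let U, V be real Hilbert spaces, F : U → V bounded linear, R : U → ℝ ∪ {+∞} proper and convex, p ≥ 1, and 0 < ν < 1/2. Suppose ξ† = (F*F)^ν ω† is a subgradient of R at u†, where Fu† = v†. Fix M > 0 and suppose R is p-convex at u† on the ball of radius M: there is C₀ > 0 with C₀‖w − u†‖^p ≤ D_{ξ†}(w, u†) for all w with ‖w − u†‖ ≤ M. Then there exist constants C₁, C₂ > 0 such that for all δ > 0, α > 0, every v^δ with ‖v† − v^δ‖ ≤ δ, and every minimiser u_α^δ of T_α(u) = (1/2)‖Fu − v^δ‖² + αR(u) with ‖u_α^δ − u†‖ ≤ M, one has D_{ξ†}(u_α^δ, u†) ≤ C₁·δ²/α + C₂·α^(pν/(p−1−pν+2ν)). -/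

import Mathlib

open ContinuousLinearMap
open scoped RealInnerProductSpace

noncomputable section

/-- `P` is the fractional power `T ^ ν` of the (positive self-adjoint) operator `T`, defined
via the continuous functional calculus: there is a continuous star-algebra homomorphism from
`C(σ(T), ℝ)` to the bounded operators mapping the identity function to `T` (such a
homomorphism is unique by Stone–Weierstrass), and `P` is the image of (a continuous extension
of) the function `x ↦ x ^ ν`. -/
def IsFractionalPower {W : Type*} [NormedAddCommGroup W] [InnerProductSpace ℝ W]
    [CompleteSpace W] (T : W →L[ℝ] W) (ν : ℝ) (P : W →L[ℝ] W) : Prop :=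
  ∃ Φ : C(spectrum ℝ T, ℝ) →⋆ₐ[ℝ] (W →L[ℝ] W),
    Continuous Φ ∧
    Φ ((ContinuousMap.id ℝ).restrict (spectrum ℝ T)) = T ∧
    ∃ f : C(ℝ, ℝ), (∀ x ∈ spectrum ℝ T, f x = x ^ ν) ∧
      Φ (f.restrict (spectrum ℝ T)) = P

/-- `ξ` is a subgradient of the extended-real-valued functional `R` at `u`:
`R u < +∞` and `R w ≥ R u + ⟪ξ, w - u⟫` for all `w`. -/
def IsSubgradient {U : Type*} [NormedAddCommGroup U] [InnerProductSpace ℝ U]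
    (R : U → EReal) (ξ u : U) : Prop :=
  R u < ⊤ ∧ ∀ w, R u + ((⟪ξ, w - u⟫ : ℝ) : EReal) ≤ R w

/-- Convexity for extended-real-valued functionals. -/
def ErealConvexOn {U : Type*} [NormedAddCommGroup U] [InnerProductSpace ℝ U]
    (R : U → EReal) : Prop :=
  ∀ u w : U, ∀ t : ℝ, 0 ≤ t → t ≤ 1 →
    R (t • u + (1 - t) • w) ≤ ((t : ℝ) : EReal) * R u + (((1 - t : ℝ)) : EReal) * R w

/-- The Bregman distance `D_ξ(w, u) = R w - R u - ⟪ξ, w - u⟫`. -/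
def Breg {U : Type*} [NormedAddCommGroup U] [InnerProductSpace ℝ U]
    (R : U → EReal) (ξ w u : U) : EReal :=
  R w - R u - ((⟪ξ, w - u⟫ : ℝ) : EReal)

/-- The Tikhonov functional `T_α(u) = (1/2)‖F u - v‖² + α R(u)`. -/
def Tik {U V : Type*} [NormedAddCommGroup U] [InnerProductSpace ℝ U]
    [NormedAddCommGroup V] [InnerProductSpace ℝ V]
    (F : U →L[ℝ] V) (R : U → EReal) (α : ℝ) (v : V) (u : U) : EReal :=
  (((1 : ℝ) / 2 * ‖F u - v‖ ^ 2 : ℝ) : EReal) + ((α : ℝ) : EReal) * R u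

/-!
The source condition enters only through the interpolation inequality
`‖(F*F)^ν w‖ ≤ ε^ν ‖w‖ + ε^(ν-1/2) ‖F w‖` for every `ε > 0`, which is the scalar inequality
`x^(2ν) ≤ ε^(2ν) + ε^(2ν-1) x` on the spectrum of `F*F` pushed through the (positive) functional
calculus. Comparing `T_α(u_α^δ) ≤ T_α(u†)` then bounds the Bregman distance `D` by
`δ²/α + α ‖ω†‖² ε^(2ν-1) + ‖ω†‖ ε^ν ‖u_α^δ - u†‖`, and p-convexity bounds the last norm by
`(D/C₀)^(1/p)`. For `p > 1` this term is absorbed into `D` at the price of `ε^(νp/(p-1))`, and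
`ε = α^((p-1)/(p-1-pν+2ν))` makes both `ε`-terms equal to `α^(pν/(p-1-pν+2ν))`; for `p = 1` a fixed
small `ε` absorbs it and the rate is linear in `α`.
-/

namespace Real

lemma rpow_le_rpow_add_rpow_sub_one_mul {x ε s : ℝ} (hx : 0 ≤ x) (hε : 0 < ε) (hs₀ : 0 ≤ s)
    (hs₁ : s ≤ 1) : x ^ s ≤ ε ^ s + ε ^ (s - 1) * x := by
  rcases le_or_gt x ε with hxε | hεx
  · have := rpow_le_rpow hx hxε hs₀
    have : 0 ≤ ε ^ (s - 1) * x := by positivity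
    linarith
  · have hx₀ : 0 < x := hε.trans hεx
    calc x ^ s = x ^ (s - 1) * x := by rw [rpow_sub_one hx₀.ne', div_mul_cancel₀ _ hx₀.ne']
      _ ≤ ε ^ (s - 1) * x :=
        mul_le_mul_of_nonneg_right (rpow_le_rpow_of_nonpos hε hεx.le (by linarith)) hx
      _ ≤ ε ^ s + ε ^ (s - 1) * x := le_add_of_nonneg_left (by positivity)

lemma le_two_mul_add_rpow_of_le_add_mul_rpow_inv {p A B D : ℝ} (hp : 1 < p) (hA : 0 ≤ A)
    (hB : 0 ≤ B) (hD : 0 ≤ D) (h : D ≤ A + B * D ^ p⁻¹) :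
    D ≤ 2 * A + (2 * B) ^ (p / (p - 1)) := by
  have hC : 0 ≤ (2 * B) ^ (p / (p - 1)) := by positivity
  by_cases hsmall : B * D ^ p⁻¹ ≤ D / 2
  · linarith
  rcases hD.eq_or_lt with rfl | hD₀
  · linarith
  have hp₀ : p ≠ 0 := by positivity
  have hp₁ : p - 1 ≠ 0 := by linarith
  have hsplit : D = D ^ p⁻¹ * D ^ (1 - p⁻¹) := by rw [← rpow_add hD₀]; simp
  have hlarge : D ^ (1 - p⁻¹) < 2 * B := by
    have : D ^ p⁻¹ * D ^ (1 - p⁻¹) < D ^ p⁻¹ * (2 * B) := by rw [← hsplit]; linarith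
    exact lt_of_mul_lt_mul_left this (by positivity)
  calc D = (D ^ (1 - p⁻¹)) ^ (p / (p - 1)) := by
        rw [← rpow_mul hD, show (1 - p⁻¹) * (p / (p - 1)) = 1 by field_simp, rpow_one]
    _ ≤ (2 * B) ^ (p / (p - 1)) := by gcongr
    _ ≤ 2 * A + (2 * B) ^ (p / (p - 1)) := by linarith

lemma le_div_add_of_sq_div_two_add_le {α D r δ c m : ℝ} (hα : 0 < α)
    (h : r ^ 2 / 2 + α * D ≤ δ ^ 2 / 2 + α * (m + c * (r + δ))) :
    D ≤ δ ^ 2 / α + α * c ^ 2 + m := by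
  have : α * D ≤ δ ^ 2 + α * (α * c ^ 2 + m) := by
    nlinarith [sq_nonneg (r - α * c), sq_nonneg (δ - α * c)]
  have hrhs : δ ^ 2 / α + α * c ^ 2 + m = (δ ^ 2 + α * (α * c ^ 2 + m)) / α := by
    field_simp
    ring
  rw [hrhs, le_div_iff₀' hα]
  exact this

lemma exists_linear_rate_of_forall_le {ν C₀ K : ℝ} (hν : 0 < ν) (hC₀ : 0 < C₀) (hK : 0 ≤ K) :
    ∃ C, ∀ δ α D e : ℝ, 0 < α → 0 ≤ e → C₀ * e ≤ D →
      (∀ ε > 0, D ≤ δ ^ 2 / α + α * (K * ε ^ (ν - 1 / 2)) ^ 2 + K * ε ^ ν * e) →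
      D ≤ 2 * δ ^ 2 / α + C * α := by
  set ε₀ := (C₀ / (2 * (K + 1))) ^ ν⁻¹
  have hε₀ : 0 < ε₀ := by positivity
  have hKε₀ : K * ε₀ ^ ν ≤ C₀ / 2 := by
    rw [← rpow_mul (by positivity), inv_mul_cancel₀ hν.ne', rpow_one, mul_div, div_le_div_iff₀]
      <;> nlinarith
  refine ⟨2 * (K * ε₀ ^ (ν - 1 / 2)) ^ 2, fun δ α D e hα he hD H ↦ ?_⟩
  have hε₀D := H ε₀ hε₀
  have habsorb : K * ε₀ ^ ν * e ≤ C₀ / 2 * e := mul_le_mul_of_nonneg_right hKε₀ he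
  have hdiv : 2 * δ ^ 2 / α = 2 * (δ ^ 2 / α) := mul_div_assoc _ _ _
  nlinarith

lemma exists_rate_of_forall_le_of_one_lt {p ν C₀ K : ℝ} (hp : 1 < p) (hν₀ : 0 < ν) (hν₁ : ν < 1)
    (hC₀ : 0 < C₀) (hK : 0 ≤ K) :
    ∃ C, ∀ δ α D e : ℝ, 0 < α → 0 ≤ D → 0 ≤ e → C₀ * e ^ p ≤ D →
      (∀ ε > 0, D ≤ δ ^ 2 / α + α * (K * ε ^ (ν - 1 / 2)) ^ 2 + K * ε ^ ν * e) →
      D ≤ 2 * δ ^ 2 / α + C * α ^ (p * ν / (p - 1 - p * ν + 2 * ν)) := by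
  set q := p - 1 - p * ν + 2 * ν
  have hq : 0 < q := by nlinarith
  have hp₁ : p - 1 ≠ 0 := by linarith
  refine ⟨2 * K ^ 2 + (2 * (K / C₀ ^ p⁻¹)) ^ (p / (p - 1)), fun δ α D e hα hD he hpc H ↦ ?_⟩
  -- the choice of `ε` balances the two error terms, both become `α ^ (p * ν / q)`
  set ε := α ^ ((p - 1) / q)
  have hε : 0 < ε := by positivity
  have hε_res : α * (ε ^ (ν - 1 / 2)) ^ 2 = α ^ (p * ν / q) := by
    calc α * (ε ^ (ν - 1 / 2)) ^ 2 = α ^ (1 : ℝ) * α ^ ((p - 1) / q * (2 * ν - 1)) := by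
          rw [rpow_one, ← rpow_natCast, ← rpow_mul hε.le, ← rpow_mul hα.le]
          ring_nf
      _ = α ^ (p * ν / q) := by
          rw [← rpow_add hα]
          congr 1
          field_simp
          ring
  have hε_abs : (ε ^ ν) ^ (p / (p - 1)) = α ^ (p * ν / q) := by
    rw [← rpow_mul hε.le, ← rpow_mul hα.le]
    congr 1; field_simp
  have he_le : e ≤ D ^ p⁻¹ / C₀ ^ p⁻¹ := by
    rw [← div_rpow hD hC₀.le, le_rpow_inv_iff_of_pos he (by positivity) (by linarith),
      le_div_iff₀' hC₀]
    exact hpc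
  have hfit : D ≤ (δ ^ 2 / α + α * (K * ε ^ (ν - 1 / 2)) ^ 2)
      + (K / C₀ ^ p⁻¹ * ε ^ ν) * D ^ p⁻¹ := by
    calc D ≤ δ ^ 2 / α + α * (K * ε ^ (ν - 1 / 2)) ^ 2 + K * ε ^ ν * e := H ε hε
      _ ≤ δ ^ 2 / α + α * (K * ε ^ (ν - 1 / 2)) ^ 2 + K * ε ^ ν * (D ^ p⁻¹ / C₀ ^ p⁻¹) := by
          gcongr
      _ = _ := by ring
  have habs := le_two_mul_add_rpow_of_le_add_mul_rpow_inv hp (by positivity) (by positivity) hD hfit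
  rw [mul_pow, ← mul_assoc, mul_comm α, mul_assoc, hε_res, ← mul_assoc,
    mul_rpow (by positivity) (by positivity), hε_abs] at habs
  exact habs.trans_eq (by ring)

lemma exists_rate_of_forall_le {p ν C₀ K : ℝ} (hp : 1 ≤ p) (hν₀ : 0 < ν) (hν₁ : ν < 1)
    (hC₀ : 0 < C₀) (hK : 0 ≤ K) :
    ∃ C, ∀ δ α D e : ℝ, 0 < α → 0 ≤ D → 0 ≤ e → C₀ * e ^ p ≤ D →
      (∀ ε > 0, D ≤ δ ^ 2 / α + α * (K * ε ^ (ν - 1 / 2)) ^ 2 + K * ε ^ ν * e) →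
      D ≤ 2 * δ ^ 2 / α + C * α ^ (p * ν / (p - 1 - p * ν + 2 * ν)) := by
  rcases hp.eq_or_lt with rfl | hp
  · obtain ⟨C, hC⟩ := exists_linear_rate_of_forall_le hν₀ hC₀ hK
    refine ⟨C, fun δ α D e hα _ he hpc H ↦ ?_⟩
    rw [show 1 - 1 - 1 * ν + 2 * ν = ν by ring, one_mul, div_self hν₀.ne', rpow_one]
    exact hC δ α D e hα he (by simpa using hpc) H
  · exact exists_rate_of_forall_le_of_one_lt hp hν₀ hν₁ hC₀ hK

end Real

section FunctionalCalculus

variable {X W : Type*} [TopologicalSpace X] [NormedAddCommGroup W] [InnerProductSpace ℝ W]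
  [CompleteSpace W]

lemma StarAlgHom.isPositive_apply_of_nonneg (Φ : C(X, ℝ) →⋆ₐ[ℝ] (W →L[ℝ] W)) {g : C(X, ℝ)}
    (hg : 0 ≤ g) : (Φ g).IsPositive := by
  let s : C(X, ℝ) := ⟨fun x ↦ √(g x), by fun_prop⟩
  have hs : g = star s * s := by
    ext x
    exact (Real.mul_self_sqrt (hg x)).symm
  rw [hs, map_mul, map_star, star_eq_adjoint]
  exact isPositive_adjoint_comp_self _

end FunctionalCalculus

namespace IsFractionalPower

variable {U V : Type*} [NormedAddCommGroup U] [InnerProductSpace ℝ U] [CompleteSpace U]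
  [NormedAddCommGroup V] [InnerProductSpace ℝ V] [CompleteSpace V]
  {F : U →L[ℝ] V} {ν : ℝ} {P : U →L[ℝ] U}

lemma _root_.ContinuousLinearMap.nonneg_of_mem_spectrum_adjoint_comp_self {x : ℝ}
    (hx : x ∈ spectrum ℝ ((adjoint F).comp F)) : 0 ≤ x :=
  spectrum_nonneg_of_nonneg ((nonneg_iff_isPositive _).2 (isPositive_adjoint_comp_self F)) hx

lemma isPositive (hP : IsFractionalPower ((adjoint F).comp F) ν P) : P.IsPositive := by
  obtain ⟨Φ, -, -, f, hf, rfl⟩ := hP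
  refine Φ.isPositive_apply_of_nonneg fun x ↦ ?_
  simpa [hf x x.2] using Real.rpow_nonneg (nonneg_of_mem_spectrum_adjoint_comp_self x.2) ν

lemma norm_sq_apply_le (hP : IsFractionalPower ((adjoint F).comp F) ν P) (hν₀ : 0 ≤ ν)
    (hν₁ : ν ≤ 1 / 2) (w : U) {ε : ℝ} (hε : 0 < ε) :
    ‖P w‖ ^ 2 ≤ ε ^ (2 * ν) * ‖w‖ ^ 2 + ε ^ (2 * ν - 1) * ‖F w‖ ^ 2 := by
  have hPpos := hP.isPositive
  obtain ⟨Φ, -, hid, f, hf, rfl⟩ := hP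
  have hpt : ∀ x ∈ spectrum ℝ ((adjoint F).comp F),
      f x * f x ≤ ε ^ (2 * ν) + ε ^ (2 * ν - 1) * x := by
    intro x hx
    have hx₀ := nonneg_of_mem_spectrum_adjoint_comp_self hx
    rw [hf x hx, ← sq, ← Real.rpow_natCast, ← Real.rpow_mul hx₀, Nat.cast_ofNat, mul_comm ν]
    exact Real.rpow_le_rpow_add_rpow_sub_one_mul hx₀ hε (by positivity) (by linarith)
  have hg : 0 ≤ ε ^ (2 * ν) • 1 + ε ^ (2 * ν - 1) •
      (ContinuousMap.id ℝ).restrict (spectrum ℝ ((adjoint F).comp F))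
      - f.restrict (spectrum ℝ ((adjoint F).comp F)) * f.restrict _ := fun x ↦ by
    simpa [sub_nonneg] using hpt x x.2
  have := (Φ.isPositive_apply_of_nonneg hg).inner_nonneg_left w
  rw [map_sub, map_add, map_smul, map_smul, map_one, hid, map_mul] at this
  simp only [sub_apply, add_apply, smul_apply, one_apply_eq_self, mul_apply_eq_comp,
    inner_sub_left, inner_add_left, real_inner_smul_left, comp_apply, adjoint_inner_left,
    real_inner_self_eq_norm_sq] at this
  rw [hPpos.inner_left_eq_inner_right, real_inner_self_eq_norm_sq] at this
  linarith

lemma norm_apply_le (hP : IsFractionalPower ((adjoint F).comp F) ν P) (hν₀ : 0 ≤ ν)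
    (hν₁ : ν ≤ 1 / 2) (w : U) {ε : ℝ} (hε : 0 < ε) :
    ‖P w‖ ≤ ε ^ ν * ‖w‖ + ε ^ (ν - 1 / 2) * ‖F w‖ := by
  have h := hP.norm_sq_apply_le hν₀ hν₁ w hε
  have hsq : ∀ t : ℝ, ε ^ (2 * t) = (ε ^ t) ^ 2 := fun t ↦ by
    rw [← Real.rpow_natCast, ← Real.rpow_mul hε.le, Nat.cast_ofNat, mul_comm]
  rw [hsq, show 2 * ν - 1 = 2 * (ν - 1 / 2) by ring, hsq] at h
  refine (pow_le_pow_iff_left₀ (norm_nonneg _) (by positivity) two_ne_zero).1 ?_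
  nlinarith [mul_nonneg (mul_nonneg (Real.rpow_nonneg hε.le ν) (norm_nonneg w))
    (mul_nonneg (Real.rpow_nonneg hε.le (ν - 1 / 2)) (norm_nonneg (F w)))]

lemma neg_inner_apply_le (hP : IsFractionalPower ((adjoint F).comp F) ν P) (hν₀ : 0 ≤ ν)
    (hν₁ : ν ≤ 1 / 2) (ω w : U) {ε : ℝ} (hε : 0 < ε) :
    -⟪P ω, w⟫ ≤ ‖ω‖ * (ε ^ ν * ‖w‖ + ε ^ (ν - 1 / 2) * ‖F w‖) := by
  rw [hP.isPositive.inner_left_eq_inner_right]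
  calc -⟪ω, P w⟫ ≤ ‖ω‖ * ‖P w‖ := (neg_le_abs _).trans (abs_real_inner_le_norm _ _)
    _ ≤ _ := by gcongr; exact hP.norm_apply_le hν₀ hν₁ w hε

end IsFractionalPower

lemma IsSubgradient.exists_breg_eq_coe_of_tik_le {U V : Type*} [NormedAddCommGroup U]
    [InnerProductSpace ℝ U] [NormedAddCommGroup V] [InnerProductSpace ℝ V] {F : U →L[ℝ] V}
    {R : U → EReal} {ξ u₀ u : U} (hsub : IsSubgradient R ξ u₀) (hu₀ : R u₀ ≠ ⊥) (hu : R u ≠ ⊥)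
    {α : ℝ} (hα : 0 < α) {v : V} (hT : Tik F R α v u ≤ Tik F R α v u₀) :
    ∃ D : ℝ, Breg R ξ u u₀ = D ∧ 0 ≤ D ∧
      ‖F u - v‖ ^ 2 / 2 + α * D ≤ ‖F u₀ - v‖ ^ 2 / 2 - α * ⟪ξ, u - u₀⟫ := by
  obtain ⟨r₀, hr₀⟩ : ∃ r : ℝ, R u₀ = r := ⟨_, (EReal.coe_toReal hsub.1.ne hu₀).symm⟩
  have hu_top : R u ≠ ⊤ := by
    intro htop
    rw [Tik, Tik, htop, hr₀, EReal.coe_mul_top_of_pos hα,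
      EReal.add_top_of_ne_bot (EReal.coe_ne_bot _), top_le_iff] at hT
    exact EReal.coe_ne_top _ (by exact_mod_cast hT)
  obtain ⟨r, hr⟩ : ∃ r : ℝ, R u = r := ⟨_, (EReal.coe_toReal hu_top hu).symm⟩
  have hs := hsub.2 u
  rw [hr₀, hr] at hs
  rw [Tik, Tik, hr₀, hr] at hT
  norm_cast at hs hT
  refine ⟨r - r₀ - ⟪ξ, u - u₀⟫, by rw [Breg, hr, hr₀]; norm_cast, by linarith, by nlinarith⟩

theorem pconvex_rates_estimate_general
    {U V : Type*} [NormedAddCommGroup U] [InnerProductSpace ℝ U] [CompleteSpace U]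
    [NormedAddCommGroup V] [InnerProductSpace ℝ V] [CompleteSpace V]
    (F : U →L[ℝ] V) (R : U → EReal) (hRbot : ∀ u, R u ≠ ⊥)
    (p ν : ℝ) (hp : 1 ≤ p) (hν0 : 0 < ν) (hν1 : ν < 1 / 2)
    (P : U →L[ℝ] U) (hP : IsFractionalPower ((adjoint F).comp F) ν P)
    (udag : U) (vdag : V) (hud : F udag = vdag)
    (ωdag ξdag : U) (hξ : ξdag = P ωdag) (hsub : IsSubgradient R ξdag udag)
    (M : ℝ) (C₀ : ℝ) (hC₀ : 0 < C₀)
    (hpconv : ∀ w : U, ‖w - udag‖ ≤ M →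
      ((C₀ * ‖w - udag‖ ^ p : ℝ) : EReal) ≤ Breg R ξdag w udag) :
    ∃ C₁ C₂ : ℝ, 0 < C₁ ∧ 0 < C₂ ∧
      ∀ δ α : ℝ, 0 < δ → 0 < α → ∀ vδ : V, ‖vdag - vδ‖ ≤ δ →
        ∀ uαδ : U, (∀ u, Tik F R α vδ uαδ ≤ Tik F R α vδ u) → ‖uαδ - udag‖ ≤ M →
          Breg R ξdag uαδ udag
            ≤ ((C₁ * δ ^ 2 / α + C₂ * α ^ (p * ν / (p - 1 - p * ν + 2 * ν)) : ℝ) : EReal) := by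
  obtain ⟨C, hC⟩ := Real.exists_rate_of_forall_le hp hν0 (by linarith) hC₀ (norm_nonneg ωdag)
  refine ⟨2, max C 1, two_pos, one_pos.trans_le (le_max_right _ _), ?_⟩
  intro δ α _ hα vδ hvδ u hmin hu
  obtain ⟨D, hDeq, hD, hTik⟩ :=
    hsub.exists_breg_eq_coe_of_tik_le (hRbot udag) (hRbot u) hα (hmin udag)
  have hpc : C₀ * ‖u - udag‖ ^ p ≤ D := by exact_mod_cast hDeq ▸ hpconv u hu
  have hdata : ‖F udag - vδ‖ ^ 2 ≤ δ ^ 2 := by rw [hud]; gcongr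
  have hres : ‖F (u - udag)‖ ≤ ‖F u - vδ‖ + δ := by
    rw [map_sub, hud, ← sub_sub_sub_cancel_right _ _ vδ]
    exact (norm_sub_le _ _).trans (by gcongr)
  have hε : ∀ ε > 0, D ≤ δ ^ 2 / α + α * (‖ωdag‖ * ε ^ (ν - 1 / 2)) ^ 2
      + ‖ωdag‖ * ε ^ ν * ‖u - udag‖ := fun ε hε ↦ by
    have hsrc := hξ ▸ hP.neg_inner_apply_le hν0.le hν1.le ωdag (u - udag) hε
    have hsrc' : -⟪ξdag, u - udag⟫ ≤ ‖ωdag‖ * ε ^ ν * ‖u - udag‖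
        + ‖ωdag‖ * ε ^ (ν - 1 / 2) * (‖F u - vδ‖ + δ) := by
      refine hsrc.trans ?_
      rw [mul_add, ← mul_assoc, ← mul_assoc]
      gcongr
    refine Real.le_div_add_of_sq_div_two_add_le (r := ‖F u - vδ‖) hα ?_
    nlinarith [mul_le_mul_of_nonneg_left hsrc' hα.le]
  rw [hDeq, EReal.coe_le_coe_iff]
  calc D ≤ 2 * δ ^ 2 / α + C * α ^ (p * ν / (p - 1 - p * ν + 2 * ν)) :=
        hC δ α D _ hα hD (norm_nonneg _) hpc hε
    _ ≤ _ := by gcongr; exact le_max_left _ _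

/-- rates under p-convexity, estimate form. -/
theorem pconvex_rates_estimate
    {U V : Type*} [NormedAddCommGroup U] [InnerProductSpace ℝ U] [CompleteSpace U]
    [NormedAddCommGroup V] [InnerProductSpace ℝ V] [CompleteSpace V]
    (F : U →L[ℝ] V) (R : U → EReal) (hRbot : ∀ u, R u ≠ ⊥) (hconv : ErealConvexOn R)
    (p ν : ℝ) (hp : 1 ≤ p) (hν0 : 0 < ν) (hν1 : ν < 1 / 2)
    (P : U →L[ℝ] U) (hP : IsFractionalPower ((adjoint F).comp F) ν P)
    (udag : U) (vdag : V) (hud : F udag = vdag)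
    (ωdag ξdag : U) (hξ : ξdag = P ωdag) (hsub : IsSubgradient R ξdag udag)
    (M : ℝ) (hM : 0 < M) (C₀ : ℝ) (hC₀ : 0 < C₀)
    (hpconv : ∀ w : U, ‖w - udag‖ ≤ M →
      ((C₀ * ‖w - udag‖ ^ p : ℝ) : EReal) ≤ Breg R ξdag w udag) :
    ∃ C₁ C₂ : ℝ, 0 < C₁ ∧ 0 < C₂ ∧
      ∀ δ α : ℝ, 0 < δ → 0 < α → ∀ vδ : V, ‖vdag - vδ‖ ≤ δ →
        ∀ uαδ : U, (∀ u, Tik F R α vδ uαδ ≤ Tik F R α vδ u) → ‖uαδ - udag‖ ≤ M →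
          Breg R ξdag uαδ udag
            ≤ ((C₁ * δ ^ 2 / α + C₂ * α ^ (p * ν / (p - 1 - p * ν + 2 * ν)) : ℝ) : EReal) :=
  pconvex_rates_estimate_general F R hRbot p ν hp hν0 hν1 P hP udag vdag hud ωdag ξdag hξ hsub M C₀
    hC₀ hpconv
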